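/- Fix N ≥ 1 and a signature function ε : Fin N → {1, −1}. Define, for sufficiently differentiable g : ℂ^N → ℂ and indices A, B ∈ Fin N, the flat ambient tractor-D operators D_A g = (N − 1)·∂_A g + E(∂_A g) + Ē(∂_A g) − ε_A·conj(x_A)·Δg and D_{B̄} g = (N − 1)·∂_{B̄} g + E(∂_{B̄} g) + Ē(∂_{B̄} g) − ε_B·x_B·Δg, where ∂, E, Ē, Δ are the Wirtinger derivatives, Euler operators and flat Laplacian below. Then for every f : ℂ^N → ℂ infinitely differentiable in the real sense and all indices A, B, at every point x: D_A(D_{B̄} f) = ε_A ε_B·conj(x_A)·x_B·Δ²f − [(N−1) + E + Ē]( ε_B·x_B·∂_A Δf + ε_A·conj(x_A)·∂_{B̄} Δf + ε_A·(if A = B then 1 else 0)·Δf ) + [(N−1) + E + Ē]∘[N + E + Ē]( ∂_A ∂_{B̄} f ), where [(N−1)+E+Ē] and [N+E+Ē] act as operators on the full expressions to their right. (This is the base case k = 0 of Proposition 6.2 of the paper — the expansion of Δ^k D_A D_{B̄} — in the flat, curvature-free ambient space, where all error and curvature terms vanish identically.) -/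

import Mathlib

open Finset

/-- Wirtinger derivative `∂_A f` of a function on `ℂ^N`, defined via the real Fréchet
derivative. -/
noncomputable def wder {N : ℕ} (f : (Fin N → ℂ) → ℂ) (A : Fin N) (x : Fin N → ℂ) : ℂ :=
  (1 / 2) * ((fderiv ℝ f x) (Pi.single A 1) - Complex.I * (fderiv ℝ f x) (Pi.single A Complex.I))

/-- Conjugate Wirtinger derivative `∂_{Ā} f`. -/
noncomputable def wderBar {N : ℕ} (f : (Fin N → ℂ) → ℂ) (A : Fin N) (x : Fin N → ℂ) : ℂ :=
  (1 / 2) * ((fderiv ℝ f x) (Pi.single A 1) + Complex.I * (fderiv ℝ f x) (Pi.single A Complex.I))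

/-- Holomorphic Euler operator `E f = ∑_A x_A ∂_A f`. -/
noncomputable def eulerE {N : ℕ} (f : (Fin N → ℂ) → ℂ) (x : Fin N → ℂ) : ℂ :=
  ∑ A, x A * wder f A x

/-- Antiholomorphic Euler operator `Ē f = ∑_A conj(x_A) ∂_{Ā} f`. -/
noncomputable def eulerEbar {N : ℕ} (f : (Fin N → ℂ) → ℂ) (x : Fin N → ℂ) : ℂ :=
  ∑ A, (starRingEnd ℂ) (x A) * wderBar f A x

/-- The flat ambient Laplacian `Δ f = ∑_A ε_A ∂_A ∂_{Ā} f` for a signature `ε`. -/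
noncomputable def ambLap {N : ℕ} (ε : Fin N → ℝ) (f : (Fin N → ℂ) → ℂ) (x : Fin N → ℂ) : ℂ :=
  ∑ A, (ε A : ℂ) * wder (fun y => wderBar f A y) A x

/-- The defining function of the null cone, `r(x) = ∑_A ε_A |x_A|²`. -/
noncomputable def rFun {N : ℕ} (ε : Fin N → ℝ) (x : Fin N → ℂ) : ℂ :=
  ∑ A, (ε A : ℂ) * (Complex.normSq (x A) : ℂ)

/-- The flat ambient tractor-D operator
`D_A g = (N−1)∂_A g + E(∂_A g) + Ē(∂_A g) − ε_A conj(x_A) Δg`. -/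
noncomputable def Dop {N : ℕ} (ε : Fin N → ℝ) (A : Fin N) (g : (Fin N → ℂ) → ℂ)
    (x : Fin N → ℂ) : ℂ :=
  ((N : ℂ) - 1) * wder g A x + eulerE (fun y => wder g A y) x +
    eulerEbar (fun y => wder g A y) x - (ε A : ℂ) * (starRingEnd ℂ) (x A) * ambLap ε g x

/-- The conjugate flat ambient tractor-D operator
`D_{B̄} g = (N−1)∂_{B̄} g + E(∂_{B̄} g) + Ē(∂_{B̄} g) − ε_B x_B Δg`. -/
noncomputable def DopBar {N : ℕ} (ε : Fin N → ℝ) (B : Fin N) (g : (Fin N → ℂ) → ℂ)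
    (x : Fin N → ℂ) : ℂ :=
  ((N : ℂ) - 1) * wderBar g B x + eulerE (fun y => wderBar g B y) x +
    eulerEbar (fun y => wderBar g B y) x - (ε B : ℂ) * x B * ambLap ε g x

/-- The operator `[c + E + Ē]` acting on ambient functions. -/
noncomputable def opShift {N : ℕ} (c : ℂ) (g : (Fin N → ℂ) → ℂ) (x : Fin N → ℂ) : ℂ :=
  c * g x + eulerE g x + eulerEbar g x

noncomputable def dd {N : ℕ} (g : (Fin N → ℂ) → ℂ) (v : Fin N → ℂ) (x : Fin N → ℂ) : ℂ :=
  fderiv ℝ g x v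

variable {N : ℕ} {g h : (Fin N → ℂ) → ℂ} {v w x : Fin N → ℂ} {A B C : Fin N}

lemma cdiff {E F : Type*} [NormedAddCommGroup E] [NormedSpace ℝ E] [NormedAddCommGroup F]
    [NormedSpace ℝ F] {g : E → F} (hg : ContDiff ℝ (⊤ : ℕ∞) g) : Differentiable ℝ g :=
  hg.differentiable (by simp)

lemma contDiff_fderiv (hg : ContDiff ℝ (⊤ : ℕ∞) g) :
    ContDiff ℝ (⊤ : ℕ∞) (fderiv ℝ g) := hg.fderiv_right (by exact_mod_cast le_top)

lemma dd_contDiff (hg : ContDiff ℝ (⊤ : ℕ∞) g) (v : Fin N → ℂ) :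
    ContDiff ℝ (⊤ : ℕ∞) (dd g v) := (contDiff_fderiv hg).clm_apply contDiff_const

lemma dd_add (hg : ContDiff ℝ (⊤ : ℕ∞) g) (hh : ContDiff ℝ (⊤ : ℕ∞) h) :
    dd (fun y => g y + h y) v x = dd g v x + dd h v x := by
  unfold dd
  rw [fderiv_fun_add (cdiff hg).differentiableAt (cdiff hh).differentiableAt]
  rfl

lemma dd_const_mul (hg : ContDiff ℝ (⊤ : ℕ∞) g) (c : ℂ) :
    dd (fun y => c * g y) v x = c * dd g v x := by
  unfold dd
  rw [fderiv_const_mul (cdiff hg).differentiableAt c]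
  rfl

lemma dd_sub (hg : ContDiff ℝ (⊤ : ℕ∞) g) (hh : ContDiff ℝ (⊤ : ℕ∞) h) :
    dd (fun y => g y - h y) v x = dd g v x - dd h v x := by
  unfold dd
  rw [fderiv_fun_sub (cdiff hg).differentiableAt (cdiff hh).differentiableAt]
  rfl

lemma dd_mul (hg : ContDiff ℝ (⊤ : ℕ∞) g) (hh : ContDiff ℝ (⊤ : ℕ∞) h) :
    dd (fun y => g y * h y) v x = dd g v x * h x + g x * dd h v x := by
  unfold dd
  rw [fderiv_fun_mul (cdiff hg).differentiableAt (cdiff hh).differentiableAt]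
  simp [smul_eq_mul]
  ring

lemma dd_sum {ι : Type*} (s : Finset ι) (u : ι → (Fin N → ℂ) → ℂ)
    (hu : ∀ i ∈ s, ContDiff ℝ (⊤ : ℕ∞) (u i)) :
    dd (fun y => ∑ i ∈ s, u i y) v x = ∑ i ∈ s, dd (u i) v x := by
  unfold dd
  rw [fderiv_fun_sum (fun i hi => (cdiff (hu i hi)).differentiableAt)]
  simp

lemma dd_const (c : ℂ) : dd (fun _ : Fin N → ℂ => c) v x = 0 := by
  unfold dd; rw [fderiv_fun_const]; simp

lemma dd_coord : dd (fun y : Fin N → ℂ => y B) v x = v B := by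
  have e : (fun y : Fin N → ℂ => y B) =
      (ContinuousLinearMap.proj (R := ℝ) (φ := fun _ : Fin N => ℂ) B) := rfl
  unfold dd
  rw [e, ContinuousLinearMap.fderiv]
  rfl

lemma dd_conj_coord : dd (fun y : Fin N → ℂ => (starRingEnd ℂ) (y B)) v x =
    (starRingEnd ℂ) (v B) := by
  have e : (fun y : Fin N → ℂ => (starRingEnd ℂ) (y B)) =
      ((Complex.conjCLE.toContinuousLinearMap).comp
        (ContinuousLinearMap.proj (R := ℝ) (φ := fun _ : Fin N => ℂ) B)) := rfl
  unfold dd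
  rw [e, ContinuousLinearMap.fderiv]
  rfl

lemma dd_comm (hg : ContDiff ℝ (⊤ : ℕ∞) g) (v w x) :
    dd (dd g v) w x = dd (dd g w) v x := by
  have hsymm : IsSymmSndFDerivAt ℝ g x :=
    hg.contDiffAt.isSymmSndFDerivAt (by simp; exact WithTop.coe_le_coe.mpr le_top)
  have key : ∀ u : Fin N → ℂ, fderiv ℝ (dd g u) x = (fderiv ℝ (fderiv ℝ g) x).flip u := by
    intro u
    have : dd g u = fun y => (fderiv ℝ g y) ((fun _ => u) y) := rfl
    rw [this, fderiv_clm_apply (cdiff (contDiff_fderiv hg)).differentiableAt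
      (differentiable_const u).differentiableAt]
    simp
  show (fderiv ℝ (dd g v) x) w = (fderiv ℝ (dd g w) x) v
  rw [key, key]
  simp only [ContinuousLinearMap.flip_apply]
  exact hsymm w v

lemma contDiff_coord : ContDiff ℝ (⊤ : ℕ∞) (fun y : Fin N → ℂ => y B) :=
  (ContinuousLinearMap.proj (R := ℝ) (φ := fun _ : Fin N => ℂ) B).contDiff

lemma contDiff_conj_coord :
    ContDiff ℝ (⊤ : ℕ∞) (fun y : Fin N → ℂ => (starRingEnd ℂ) (y B)) :=
  ((Complex.conjCLE.toContinuousLinearMap).comp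
    (ContinuousLinearMap.proj (R := ℝ) (φ := fun _ : Fin N => ℂ) B)).contDiff

lemma wder_eq : wder g A x = (1/2) * (dd g (Pi.single A 1) x
    - Complex.I * dd g (Pi.single A Complex.I) x) := rfl

lemma wderBar_eq : wderBar g A x = (1/2) * (dd g (Pi.single A 1) x
    + Complex.I * dd g (Pi.single A Complex.I) x) := rfl

lemma wder_contDiff (hg : ContDiff ℝ (⊤ : ℕ∞) g) : ContDiff ℝ (⊤ : ℕ∞) (wder g A) := by
  have : wder g A = fun x => (1/2 : ℂ) * (dd g (Pi.single A 1) x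
      - Complex.I * dd g (Pi.single A Complex.I) x) := rfl
  rw [this]
  exact contDiff_const.mul ((dd_contDiff hg _).sub (contDiff_const.mul (dd_contDiff hg _)))

lemma wderBar_contDiff (hg : ContDiff ℝ (⊤ : ℕ∞) g) :
    ContDiff ℝ (⊤ : ℕ∞) (wderBar g A) := by
  have : wderBar g A = fun x => (1/2 : ℂ) * (dd g (Pi.single A 1) x
      + Complex.I * dd g (Pi.single A Complex.I) x) := rfl
  rw [this]
  exact contDiff_const.mul ((dd_contDiff hg _).add (contDiff_const.mul (dd_contDiff hg _)))

lemma wder_add (hg : ContDiff ℝ (⊤ : ℕ∞) g) (hh : ContDiff ℝ (⊤ : ℕ∞) h) :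
    wder (fun y => g y + h y) A x = wder g A x + wder h A x := by
  rw [wder_eq, wder_eq, wder_eq, dd_add hg hh, dd_add hg hh]; ring

lemma wderBar_add (hg : ContDiff ℝ (⊤ : ℕ∞) g) (hh : ContDiff ℝ (⊤ : ℕ∞) h) :
    wderBar (fun y => g y + h y) A x = wderBar g A x + wderBar h A x := by
  rw [wderBar_eq, wderBar_eq, wderBar_eq, dd_add hg hh, dd_add hg hh]; ring

lemma wder_sub (hg : ContDiff ℝ (⊤ : ℕ∞) g) (hh : ContDiff ℝ (⊤ : ℕ∞) h) :
    wder (fun y => g y - h y) A x = wder g A x - wder h A x := by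
  rw [wder_eq, wder_eq, wder_eq, dd_sub hg hh, dd_sub hg hh]; ring

lemma wderBar_sub (hg : ContDiff ℝ (⊤ : ℕ∞) g) (hh : ContDiff ℝ (⊤ : ℕ∞) h) :
    wderBar (fun y => g y - h y) A x = wderBar g A x - wderBar h A x := by
  rw [wderBar_eq, wderBar_eq, wderBar_eq, dd_sub hg hh, dd_sub hg hh]; ring

lemma wder_const_mul (hg : ContDiff ℝ (⊤ : ℕ∞) g) (c : ℂ) :
    wder (fun y => c * g y) A x = c * wder g A x := by
  rw [wder_eq, wder_eq, dd_const_mul hg, dd_const_mul hg]; ring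

lemma wderBar_const_mul (hg : ContDiff ℝ (⊤ : ℕ∞) g) (c : ℂ) :
    wderBar (fun y => c * g y) A x = c * wderBar g A x := by
  rw [wderBar_eq, wderBar_eq, dd_const_mul hg, dd_const_mul hg]; ring

lemma wder_mul (hg : ContDiff ℝ (⊤ : ℕ∞) g) (hh : ContDiff ℝ (⊤ : ℕ∞) h) :
    wder (fun y => g y * h y) A x = wder g A x * h x + g x * wder h A x := by
  rw [wder_eq, wder_eq, wder_eq, dd_mul hg hh, dd_mul hg hh]; ring

lemma wderBar_mul (hg : ContDiff ℝ (⊤ : ℕ∞) g) (hh : ContDiff ℝ (⊤ : ℕ∞) h) :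
    wderBar (fun y => g y * h y) A x = wderBar g A x * h x + g x * wderBar h A x := by
  rw [wderBar_eq, wderBar_eq, wderBar_eq, dd_mul hg hh, dd_mul hg hh]; ring

lemma wder_sum {ι : Type*} (s : Finset ι) (u : ι → (Fin N → ℂ) → ℂ)
    (hu : ∀ i ∈ s, ContDiff ℝ (⊤ : ℕ∞) (u i)) :
    wder (fun y => ∑ i ∈ s, u i y) A x = ∑ i ∈ s, wder (u i) A x := by
  simp only [wder_eq, dd_sum s u hu]
  rw [Finset.mul_sum, ← Finset.sum_sub_distrib, Finset.mul_sum]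

lemma wderBar_sum {ι : Type*} (s : Finset ι) (u : ι → (Fin N → ℂ) → ℂ)
    (hu : ∀ i ∈ s, ContDiff ℝ (⊤ : ℕ∞) (u i)) :
    wderBar (fun y => ∑ i ∈ s, u i y) A x = ∑ i ∈ s, wderBar (u i) A x := by
  simp only [wderBar_eq, dd_sum s u hu]
  rw [Finset.mul_sum, ← Finset.sum_add_distrib, Finset.mul_sum]

lemma wder_coord : wder (fun y : Fin N → ℂ => y B) A x = if A = B then 1 else 0 := by
  rw [wder_eq, dd_coord, dd_coord]
  rcases eq_or_ne A B with rfl | hAB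
  · simp [Pi.single_apply] <;> norm_num
  · simp [Pi.single_apply, Ne.symm hAB, hAB]

lemma wderBar_coord : wderBar (fun y : Fin N → ℂ => y B) A x = 0 := by
  rw [wderBar_eq, dd_coord, dd_coord]
  rcases eq_or_ne A B with rfl | hAB
  · simp [Pi.single_apply] <;> norm_num
  · simp [Pi.single_apply, Ne.symm hAB, hAB]

lemma wder_conj_coord :
    wder (fun y : Fin N → ℂ => (starRingEnd ℂ) (y B)) A x = 0 := by
  rw [wder_eq, dd_conj_coord, dd_conj_coord]
  rcases eq_or_ne A B with rfl | hAB
  · simp [Pi.single_apply] <;> norm_num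
  · simp [Pi.single_apply, Ne.symm hAB, hAB]

lemma wderBar_conj_coord :
    wderBar (fun y : Fin N → ℂ => (starRingEnd ℂ) (y B)) A x = if A = B then 1 else 0 := by
  rw [wderBar_eq, dd_conj_coord, dd_conj_coord]
  rcases eq_or_ne A B with rfl | hAB
  · simp [Pi.single_apply] <;> norm_num
  · simp [Pi.single_apply, Ne.symm hAB, hAB]

lemma wder_const (c : ℂ) : wder (fun _ : Fin N → ℂ => c) A x = 0 := by
  rw [wder_eq, dd_const, dd_const]; ring

lemma dd_wder (hg : ContDiff ℝ (⊤ : ℕ∞) g) :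
    dd (wder g C) w x = (1/2) * (dd (dd g (Pi.single C 1)) w x
      - Complex.I * dd (dd g (Pi.single C Complex.I)) w x) := by
  have e : wder g C = fun y => (1/2 : ℂ) * (dd g (Pi.single C 1) y
      - Complex.I * dd g (Pi.single C Complex.I) y) := rfl
  rw [e, dd_const_mul ((dd_contDiff hg _).sub (contDiff_const.mul (dd_contDiff hg _))),
    dd_sub (dd_contDiff hg _) (contDiff_const.mul (dd_contDiff hg _)),
    dd_const_mul (dd_contDiff hg _)]

lemma dd_wderBar (hg : ContDiff ℝ (⊤ : ℕ∞) g) :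
    dd (wderBar g C) w x = (1/2) * (dd (dd g (Pi.single C 1)) w x
      + Complex.I * dd (dd g (Pi.single C Complex.I)) w x) := by
  have e : wderBar g C = fun y => (1/2 : ℂ) * (dd g (Pi.single C 1) y
      + Complex.I * dd g (Pi.single C Complex.I) y) := rfl
  rw [e, dd_const_mul ((dd_contDiff hg _).add (contDiff_const.mul (dd_contDiff hg _))),
    dd_add (dd_contDiff hg _) (contDiff_const.mul (dd_contDiff hg _)),
    dd_const_mul (dd_contDiff hg _)]

lemma wder_wder_comm (hg : ContDiff ℝ (⊤ : ℕ∞) g) :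
    wder (wder g C) A x = wder (wder g A) C x := by
  rw [wder_eq (g := wder g C), wder_eq (g := wder g A), dd_wder hg, dd_wder hg,
    dd_wder hg, dd_wder hg,
    dd_comm hg (Pi.single C 1) (Pi.single A 1),
    dd_comm hg (Pi.single C Complex.I) (Pi.single A 1),
    dd_comm hg (Pi.single C 1) (Pi.single A Complex.I),
    dd_comm hg (Pi.single C Complex.I) (Pi.single A Complex.I)]
  ring

lemma wder_wderBar_comm (hg : ContDiff ℝ (⊤ : ℕ∞) g) :
    wder (wderBar g C) A x = wderBar (wder g A) C x := by
  rw [wder_eq (g := wderBar g C), wderBar_eq (g := wder g A), dd_wderBar hg, dd_wderBar hg,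
    dd_wder hg, dd_wder hg,
    dd_comm hg (Pi.single C 1) (Pi.single A 1),
    dd_comm hg (Pi.single C Complex.I) (Pi.single A 1),
    dd_comm hg (Pi.single C 1) (Pi.single A Complex.I),
    dd_comm hg (Pi.single C Complex.I) (Pi.single A Complex.I)]
  ring

lemma wderBar_wderBar_comm (hg : ContDiff ℝ (⊤ : ℕ∞) g) :
    wderBar (wderBar g C) A x = wderBar (wderBar g A) C x := by
  rw [wderBar_eq (g := wderBar g C), wderBar_eq (g := wderBar g A), dd_wderBar hg,
    dd_wderBar hg, dd_wderBar hg, dd_wderBar hg,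
    dd_comm hg (Pi.single C 1) (Pi.single A 1),
    dd_comm hg (Pi.single C Complex.I) (Pi.single A 1),
    dd_comm hg (Pi.single C 1) (Pi.single A Complex.I),
    dd_comm hg (Pi.single C Complex.I) (Pi.single A Complex.I)]
  ring

lemma eulerE_contDiff (hg : ContDiff ℝ (⊤ : ℕ∞) g) : ContDiff ℝ (⊤ : ℕ∞) (eulerE g) := by
  have e : eulerE g = fun x => ∑ C, x C * wder g C x := rfl
  rw [e]
  exact ContDiff.sum fun i _ => contDiff_coord.mul (wder_contDiff hg)

lemma eulerEbar_contDiff (hg : ContDiff ℝ (⊤ : ℕ∞) g) :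
    ContDiff ℝ (⊤ : ℕ∞) (eulerEbar g) := by
  have e : eulerEbar g = fun x => ∑ C, (starRingEnd ℂ) (x C) * wderBar g C x := rfl
  rw [e]
  exact ContDiff.sum fun i _ => contDiff_conj_coord.mul (wderBar_contDiff hg)

lemma ambLap_contDiff {ε : Fin N → ℝ} (hg : ContDiff ℝ (⊤ : ℕ∞) g) :
    ContDiff ℝ (⊤ : ℕ∞) (ambLap ε g) := by
  have e : ambLap ε g = fun x => ∑ C, (ε C : ℂ) * wder (wderBar g C) C x := rfl
  rw [e]
  exact ContDiff.sum fun i _ => contDiff_const.mul (wder_contDiff (wderBar_contDiff hg))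

lemma eulerE_add (hg : ContDiff ℝ (⊤ : ℕ∞) g) (hh : ContDiff ℝ (⊤ : ℕ∞) h) :
    eulerE (fun y => g y + h y) x = eulerE g x + eulerE h x := by
  unfold eulerE
  rw [← Finset.sum_add_distrib]
  refine Finset.sum_congr rfl fun C _ => ?_
  rw [wder_add hg hh]; ring

lemma eulerEbar_add (hg : ContDiff ℝ (⊤ : ℕ∞) g) (hh : ContDiff ℝ (⊤ : ℕ∞) h) :
    eulerEbar (fun y => g y + h y) x = eulerEbar g x + eulerEbar h x := by
  unfold eulerEbar
  rw [← Finset.sum_add_distrib]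
  refine Finset.sum_congr rfl fun C _ => ?_
  rw [wderBar_add hg hh]; ring

lemma eulerE_sub (hg : ContDiff ℝ (⊤ : ℕ∞) g) (hh : ContDiff ℝ (⊤ : ℕ∞) h) :
    eulerE (fun y => g y - h y) x = eulerE g x - eulerE h x := by
  unfold eulerE
  rw [← Finset.sum_sub_distrib]
  refine Finset.sum_congr rfl fun C _ => ?_
  rw [wder_sub hg hh]; ring

lemma eulerEbar_sub (hg : ContDiff ℝ (⊤ : ℕ∞) g) (hh : ContDiff ℝ (⊤ : ℕ∞) h) :
    eulerEbar (fun y => g y - h y) x = eulerEbar g x - eulerEbar h x := by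
  unfold eulerEbar
  rw [← Finset.sum_sub_distrib]
  refine Finset.sum_congr rfl fun C _ => ?_
  rw [wderBar_sub hg hh]; ring

lemma eulerE_const_mul (hg : ContDiff ℝ (⊤ : ℕ∞) g) (c : ℂ) :
    eulerE (fun y => c * g y) x = c * eulerE g x := by
  unfold eulerE
  rw [Finset.mul_sum]
  refine Finset.sum_congr rfl fun C _ => ?_
  rw [wder_const_mul hg]; ring

lemma eulerEbar_const_mul (hg : ContDiff ℝ (⊤ : ℕ∞) g) (c : ℂ) :
    eulerEbar (fun y => c * g y) x = c * eulerEbar g x := by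
  unfold eulerEbar
  rw [Finset.mul_sum]
  refine Finset.sum_congr rfl fun C _ => ?_
  rw [wderBar_const_mul hg]; ring

lemma eulerE_coord_mul (hg : ContDiff ℝ (⊤ : ℕ∞) g) :
    eulerE (fun y => y B * g y) x = x B * g x + x B * eulerE g x := by
  unfold eulerE
  have e : ∀ C, wder (fun y => y B * g y) C x
      = (if C = B then 1 else 0) * g x + x B * wder g C x := fun C => by
    rw [wder_mul contDiff_coord hg, wder_coord]
  simp only [e, mul_add, Finset.sum_add_distrib]
  congr 1
  · rw [Finset.sum_eq_single B]
    · simp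
    · intro b _ hb; simp [hb]
    · simp
  · rw [Finset.mul_sum]
    exact Finset.sum_congr rfl fun C _ => by ring

lemma eulerE_conj_coord_mul (hg : ContDiff ℝ (⊤ : ℕ∞) g) :
    eulerE (fun y => (starRingEnd ℂ) (y B) * g y) x = (starRingEnd ℂ) (x B) * eulerE g x := by
  unfold eulerE
  have e : ∀ C, wder (fun y => (starRingEnd ℂ) (y B) * g y) C x
      = (starRingEnd ℂ) (x B) * wder g C x := fun C => by
    rw [wder_mul contDiff_conj_coord hg, wder_conj_coord]; ring
  simp only [e, Finset.mul_sum]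
  exact Finset.sum_congr rfl fun C _ => by ring

lemma eulerEbar_coord_mul (hg : ContDiff ℝ (⊤ : ℕ∞) g) :
    eulerEbar (fun y => y B * g y) x = x B * eulerEbar g x := by
  unfold eulerEbar
  have e : ∀ C, wderBar (fun y => y B * g y) C x
      = x B * wderBar g C x := fun C => by
    rw [wderBar_mul contDiff_coord hg, wderBar_coord]; ring
  simp only [e, Finset.mul_sum]
  exact Finset.sum_congr rfl fun C _ => by ring

lemma eulerEbar_conj_coord_mul (hg : ContDiff ℝ (⊤ : ℕ∞) g) :
    eulerEbar (fun y => (starRingEnd ℂ) (y B) * g y) x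
      = (starRingEnd ℂ) (x B) * g x + (starRingEnd ℂ) (x B) * eulerEbar g x := by
  unfold eulerEbar
  have e : ∀ C, wderBar (fun y => (starRingEnd ℂ) (y B) * g y) C x
      = (if C = B then 1 else 0) * g x + (starRingEnd ℂ) (x B) * wderBar g C x := fun C => by
    rw [wderBar_mul contDiff_conj_coord hg, wderBar_conj_coord]
  simp only [e, mul_add, Finset.sum_add_distrib]
  congr 1
  · rw [Finset.sum_eq_single B]
    · simp
    · intro b _ hb; simp [hb]
    · simp
  · rw [Finset.mul_sum]
    exact Finset.sum_congr rfl fun C _ => by ring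

lemma wder_eulerE (hg : ContDiff ℝ (⊤ : ℕ∞) g) :
    wder (fun y => eulerE g y) A x = wder g A x + eulerE (wder g A) x := by
  have e0 : (fun y => eulerE g y) = fun y => ∑ C, y C * wder g C y := rfl
  rw [e0, wder_sum Finset.univ _ (fun C _ => contDiff_coord.mul (wder_contDiff hg))]
  have e : ∀ C, wder (fun y => y C * wder g C y) A x
      = (if A = C then 1 else 0) * wder g C x + x C * wder (wder g A) C x := fun C => by
    rw [wder_mul contDiff_coord (wder_contDiff hg), wder_coord, wder_wder_comm hg]
  simp only [e, Finset.sum_add_distrib]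
  congr 1
  · rw [Finset.sum_eq_single A]
    · simp
    · intro b _ hb; simp [Ne.symm hb]
    · simp

lemma wder_eulerEbar (hg : ContDiff ℝ (⊤ : ℕ∞) g) :
    wder (fun y => eulerEbar g y) A x = eulerEbar (wder g A) x := by
  have e0 : (fun y => eulerEbar g y) = fun y => ∑ C, (starRingEnd ℂ) (y C) * wderBar g C y :=
    rfl
  rw [e0, wder_sum Finset.univ _ (fun C _ => contDiff_conj_coord.mul (wderBar_contDiff hg))]
  have e : ∀ C, wder (fun y => (starRingEnd ℂ) (y C) * wderBar g C y) A x
      = (starRingEnd ℂ) (x C) * wderBar (wder g A) C x := fun C => by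
    rw [wder_mul contDiff_conj_coord (wderBar_contDiff hg), wder_conj_coord,
      wder_wderBar_comm hg]
    ring
  simp only [e]
  rfl

lemma wderBar_eulerE (hg : ContDiff ℝ (⊤ : ℕ∞) g) :
    wderBar (fun y => eulerE g y) B x = eulerE (wderBar g B) x := by
  have e0 : (fun y => eulerE g y) = fun y => ∑ C, y C * wder g C y := rfl
  rw [e0, wderBar_sum Finset.univ _ (fun C _ => contDiff_coord.mul (wder_contDiff hg))]
  have e : ∀ C, wderBar (fun y => y C * wder g C y) B x
      = x C * wder (wderBar g B) C x := fun C => by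
    rw [wderBar_mul contDiff_coord (wder_contDiff hg), wderBar_coord,
      ← wder_wderBar_comm hg]
    ring
  simp only [e]
  rfl

lemma wderBar_eulerEbar (hg : ContDiff ℝ (⊤ : ℕ∞) g) :
    wderBar (fun y => eulerEbar g y) B x = wderBar g B x + eulerEbar (wderBar g B) x := by
  have e0 : (fun y => eulerEbar g y) = fun y => ∑ C, (starRingEnd ℂ) (y C) * wderBar g C y :=
    rfl
  rw [e0, wderBar_sum Finset.univ _ (fun C _ => contDiff_conj_coord.mul (wderBar_contDiff hg))]
  have e : ∀ C, wderBar (fun y => (starRingEnd ℂ) (y C) * wderBar g C y) B x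
      = (if B = C then 1 else 0) * wderBar g C x
        + (starRingEnd ℂ) (x C) * wderBar (wderBar g B) C x := fun C => by
    rw [wderBar_mul contDiff_conj_coord (wderBar_contDiff hg), wderBar_conj_coord,
      wderBar_wderBar_comm hg]
  simp only [e, Finset.sum_add_distrib]
  congr 1
  · rw [Finset.sum_eq_single B]
    · simp
    · intro b _ hb; simp [Ne.symm hb]
    · simp

variable {ε : Fin N → ℝ}

lemma ambLap_add (hg : ContDiff ℝ (⊤ : ℕ∞) g) (hh : ContDiff ℝ (⊤ : ℕ∞) h) :
    ambLap ε (fun y => g y + h y) x = ambLap ε g x + ambLap ε h x := by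
  unfold ambLap
  rw [← Finset.sum_add_distrib]
  refine Finset.sum_congr rfl fun C _ => ?_
  have e : (fun y => wderBar (fun z => g z + h z) C y)
      = fun y => wderBar g C y + wderBar h C y := funext fun y => wderBar_add hg hh
  rw [e, wder_add (wderBar_contDiff hg) (wderBar_contDiff hh)]; ring

lemma ambLap_sub (hg : ContDiff ℝ (⊤ : ℕ∞) g) (hh : ContDiff ℝ (⊤ : ℕ∞) h) :
    ambLap ε (fun y => g y - h y) x = ambLap ε g x - ambLap ε h x := by
  unfold ambLap
  rw [← Finset.sum_sub_distrib]
  refine Finset.sum_congr rfl fun C _ => ?_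
  have e : (fun y => wderBar (fun z => g z - h z) C y)
      = fun y => wderBar g C y - wderBar h C y := funext fun y => wderBar_sub hg hh
  rw [e, wder_sub (wderBar_contDiff hg) (wderBar_contDiff hh)]; ring

lemma ambLap_const_mul (hg : ContDiff ℝ (⊤ : ℕ∞) g) (c : ℂ) :
    ambLap ε (fun y => c * g y) x = c * ambLap ε g x := by
  unfold ambLap
  rw [Finset.mul_sum]
  refine Finset.sum_congr rfl fun C _ => ?_
  have e : (fun y => wderBar (fun z => c * g z) C y)
      = fun y => c * wderBar g C y := funext fun y => wderBar_const_mul hg c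
  rw [e, wder_const_mul (wderBar_contDiff hg)]; ring

lemma ambLap_coord_mul (hg : ContDiff ℝ (⊤ : ℕ∞) g) :
    ambLap ε (fun y => y B * g y) x
      = x B * ambLap ε g x + (ε B : ℂ) * wderBar g B x := by
  unfold ambLap
  have e : ∀ C, wder (fun y => wderBar (fun z => z B * g z) C y) C x
      = (if C = B then 1 else 0) * wderBar g C x + x B * wder (wderBar g C) C x := fun C => by
    have e1 : (fun y => wderBar (fun z => z B * g z) C y)
        = fun y => y B * wderBar g C y := by
      funext y
      rw [wderBar_mul contDiff_coord hg, wderBar_coord]; ring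
    rw [e1, wder_mul contDiff_coord (wderBar_contDiff hg), wder_coord]
  simp only [e, mul_add, Finset.sum_add_distrib]
  conv_rhs => rw [add_comm]
  congr 1
  · rw [Finset.sum_eq_single B]
    · simp
    · intro b _ hb; simp [hb]
    · simp
  · rw [Finset.mul_sum]
    exact Finset.sum_congr rfl fun C _ => by ring

lemma wder_ambLap_sum (hg : ContDiff ℝ (⊤ : ℕ∞) g) {D : Fin N} :
    wder (ambLap ε g) D x = ∑ C, (ε C : ℂ) * wder (wder (wderBar g C) C) D x := by
  have e : ambLap ε g = fun y => ∑ C, (ε C : ℂ) * wder (wderBar g C) C y := rfl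
  rw [e, wder_sum Finset.univ _
    (fun C _ => contDiff_const.mul (wder_contDiff (wderBar_contDiff hg)))]
  exact Finset.sum_congr rfl fun C _ =>
    wder_const_mul (wder_contDiff (wderBar_contDiff hg)) _

lemma wderBar_ambLap_sum (hg : ContDiff ℝ (⊤ : ℕ∞) g) {D : Fin N} :
    wderBar (ambLap ε g) D x = ∑ C, (ε C : ℂ) * wderBar (wder (wderBar g C) C) D x := by
  have e : ambLap ε g = fun y => ∑ C, (ε C : ℂ) * wder (wderBar g C) C y := rfl
  rw [e, wderBar_sum Finset.univ _
    (fun C _ => contDiff_const.mul (wder_contDiff (wderBar_contDiff hg)))]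
  exact Finset.sum_congr rfl fun C _ =>
    wderBar_const_mul (wder_contDiff (wderBar_contDiff hg)) _

lemma ambLap_eulerE (hg : ContDiff ℝ (⊤ : ℕ∞) g) :
    ambLap ε (fun y => eulerE g y) x = ambLap ε g x + eulerE (ambLap ε g) x := by
  conv_lhs => unfold ambLap
  have e : ∀ C, wder (fun y => wderBar (fun z => eulerE g z) C y) C x
      = wder (wderBar g C) C x + ∑ D, x D * wder (wder (wderBar g C) C) D x := fun C => by
    have e1 : (fun y => wderBar (fun z => eulerE g z) C y)
        = fun y => eulerE (wderBar g C) y := funext fun y => wderBar_eulerE hg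
    rw [e1, wder_eulerE (wderBar_contDiff hg)]
    rfl
  simp only [e, mul_add, Finset.sum_add_distrib]
  congr 1
  have e2 : eulerE (ambLap ε g) x = ∑ D, x D * wder (ambLap ε g) D x := rfl
  rw [e2]
  simp only [wder_ambLap_sum hg, Finset.mul_sum]
  rw [Finset.sum_comm]
  exact Finset.sum_congr rfl fun D _ => Finset.sum_congr rfl fun C _ => by ring

lemma ambLap_eulerEbar (hg : ContDiff ℝ (⊤ : ℕ∞) g) :
    ambLap ε (fun y => eulerEbar g y) x = ambLap ε g x + eulerEbar (ambLap ε g) x := by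
  conv_lhs => unfold ambLap
  have e : ∀ C, wder (fun y => wderBar (fun z => eulerEbar g z) C y) C x
      = wder (wderBar g C) C x
        + ∑ D, (starRingEnd ℂ) (x D) * wderBar (wder (wderBar g C) C) D x := fun C => by
    have e1 : (fun y => wderBar (fun z => eulerEbar g z) C y)
        = fun y => wderBar g C y + eulerEbar (wderBar g C) y :=
      funext fun y => wderBar_eulerEbar hg
    rw [e1, wder_add (wderBar_contDiff hg) (eulerEbar_contDiff (wderBar_contDiff hg)),
      wder_eulerEbar (wderBar_contDiff hg)]
    rfl
  simp only [e, mul_add, Finset.sum_add_distrib]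
  congr 1
  have e2 : eulerEbar (ambLap ε g) x
      = ∑ D, (starRingEnd ℂ) (x D) * wderBar (ambLap ε g) D x := rfl
  rw [e2]
  simp only [wderBar_ambLap_sum hg, Finset.mul_sum]
  rw [Finset.sum_comm]
  exact Finset.sum_congr rfl fun D _ => Finset.sum_congr rfl fun C _ => by ring

lemma wderBar_ambLap (hg : ContDiff ℝ (⊤ : ℕ∞) g) :
    wderBar (ambLap ε g) B x = ambLap ε (fun y => wderBar g B y) x := by
  rw [wderBar_ambLap_sum hg]
  unfold ambLap
  refine Finset.sum_congr rfl fun C _ => ?_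
  have e1 : (fun y => wderBar (fun z => wderBar g B z) C y)
      = fun y => wderBar (wderBar g C) B y := funext fun y => wderBar_wderBar_comm hg
  rw [e1]
  exact congrArg (fun t => (ε C : ℂ) * t) ((wder_wderBar_comm (wderBar_contDiff hg)).symm)

lemma wder_DopBar {f : (Fin N → ℂ) → ℂ} (hf : ContDiff ℝ (⊤ : ℕ∞) f) (A B : Fin N)
    (y : Fin N → ℂ) :
    wder (fun z => DopBar ε B f z) A y =
      (N : ℂ) * wder (fun u => wderBar f B u) A y
        + eulerE (wder (fun u => wderBar f B u) A) y
        + eulerEbar (wder (fun u => wderBar f B u) A) y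
        - (ε B : ℂ) * (if A = B then 1 else 0) * ambLap ε f y
        - (ε B : ℂ) * (y B * wder (ambLap ε f) A y) := by
  have hq : ContDiff ℝ (⊤ : ℕ∞) (wderBar f B) := wderBar_contDiff hf
  have hL : ContDiff ℝ (⊤ : ℕ∞) (ambLap ε f) := ambLap_contDiff hf
  have h1 : ContDiff ℝ (⊤ : ℕ∞) (fun z => ((N : ℂ) - 1) * wderBar f B z) :=
    contDiff_const.mul hq
  have h2 : ContDiff ℝ (⊤ : ℕ∞) (fun z => eulerE (fun u => wderBar f B u) z) :=
    eulerE_contDiff hq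
  have h3 : ContDiff ℝ (⊤ : ℕ∞) (fun z => eulerEbar (fun u => wderBar f B u) z) :=
    eulerEbar_contDiff hq
  have h4 : ContDiff ℝ (⊤ : ℕ∞) (fun z => (ε B : ℂ) * (z B * ambLap ε f z)) :=
    contDiff_const.mul (contDiff_coord.mul hL)
  have ed : (fun z => DopBar ε B f z)
      = fun z => (((N : ℂ) - 1) * wderBar f B z + eulerE (fun u => wderBar f B u) z
          + eulerEbar (fun u => wderBar f B u) z)
          - (ε B : ℂ) * (z B * ambLap ε f z) := by
    funext z; show DopBar ε B f z = _; unfold DopBar; ring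
  rw [ed, wder_sub ((h1.add h2).add h3) h4,
    wder_add (h1.add h2) h3, wder_add h1 h2, wder_const_mul hq,
    wder_eulerE hq, wder_eulerEbar hq,
    wder_const_mul (contDiff_coord.mul hL), wder_mul contDiff_coord hL, wder_coord]
  ring

lemma ambLap_DopBar {f : (Fin N → ℂ) → ℂ} (hf : ContDiff ℝ (⊤ : ℕ∞) f)
    (hε : ∀ A, ε A = 1 ∨ ε A = -1) (B : Fin N) (x : Fin N → ℂ) :
    ambLap ε (fun z => DopBar ε B f z) x =
      (N : ℂ) * wderBar (ambLap ε f) B x + eulerE (wderBar (ambLap ε f) B) x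
        + eulerEbar (wderBar (ambLap ε f) B) x
        - (ε B : ℂ) * (x B * ambLap ε (ambLap ε f) x) := by
  have hq : ContDiff ℝ (⊤ : ℕ∞) (wderBar f B) := wderBar_contDiff hf
  have hL : ContDiff ℝ (⊤ : ℕ∞) (ambLap ε f) := ambLap_contDiff hf
  have h1 : ContDiff ℝ (⊤ : ℕ∞) (fun z => ((N : ℂ) - 1) * wderBar f B z) :=
    contDiff_const.mul hq
  have h2 : ContDiff ℝ (⊤ : ℕ∞) (fun z => eulerE (fun u => wderBar f B u) z) :=
    eulerE_contDiff hq
  have h3 : ContDiff ℝ (⊤ : ℕ∞) (fun z => eulerEbar (fun u => wderBar f B u) z) :=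
    eulerEbar_contDiff hq
  have h4 : ContDiff ℝ (⊤ : ℕ∞) (fun z => (ε B : ℂ) * (z B * ambLap ε f z)) :=
    contDiff_const.mul (contDiff_coord.mul hL)
  have hb2 : (ε B : ℂ) * (ε B : ℂ) = 1 := by
    rcases hε B with h | h <;> rw [h] <;> norm_num
  have ed : (fun z => DopBar ε B f z)
      = fun z => (((N : ℂ) - 1) * wderBar f B z + eulerE (fun u => wderBar f B u) z
          + eulerEbar (fun u => wderBar f B u) z)
          - (ε B : ℂ) * (z B * ambLap ε f z) := by
    funext z; show DopBar ε B f z = _; unfold DopBar; ring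
  have efun : ambLap ε (fun u => wderBar f B u) = wderBar (ambLap ε f) B :=
    funext fun y => (wderBar_ambLap hf).symm
  rw [ed, ambLap_sub ((h1.add h2).add h3) h4,
    ambLap_add (h1.add h2) h3, ambLap_add h1 h2, ambLap_const_mul hq,
    ambLap_eulerE hq, ambLap_eulerEbar hq,
    ambLap_const_mul (contDiff_coord.mul hL), ambLap_coord_mul hL, efun]
  linear_combination (-(wderBar (ambLap ε f) B x)) * hb2

/-- The base case `k = 0` of the expansion of `Δ^k D_A D_{B̄}` (Proposition 6.2 of the paper)
in the flat, curvature-free ambient space. -/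
theorem DA_DBbar_expansion (N : ℕ) (hN : 1 ≤ N) (ε : Fin N → ℝ)
    (hε : ∀ A, ε A = 1 ∨ ε A = -1)
    (f : (Fin N → ℂ) → ℂ) (hf : ContDiff ℝ (⊤ : ℕ∞) f) (A B : Fin N) (x : Fin N → ℂ) :
    Dop ε A (fun y => DopBar ε B f y) x =
      (ε A : ℂ) * (ε B : ℂ) * (starRingEnd ℂ) (x A) * x B * (ambLap ε)^[2] f x -
        opShift ((N : ℂ) - 1)
          (fun y => (ε B : ℂ) * y B * wder (ambLap ε f) A y +
            (ε A : ℂ) * (starRingEnd ℂ) (y A) * wderBar (ambLap ε f) B y +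
            (ε A : ℂ) * (if A = B then 1 else 0) * ambLap ε f y) x +
        opShift ((N : ℂ) - 1)
          (fun y => opShift (N : ℂ) (fun z => wder (fun u => wderBar f B u) A z) y) x := by
  have hit : (ambLap ε)^[2] f = ambLap ε (ambLap ε f) := rfl
  have hDfun : (fun y => wder (fun z => DopBar ε B f z) A y)
      = fun y => (N : ℂ) * wder (fun u => wderBar f B u) A y
        + eulerE (wder (fun u => wderBar f B u) A) y
        + eulerEbar (wder (fun u => wderBar f B u) A) y
        - (ε B : ℂ) * (if A = B then 1 else 0) * ambLap ε f y
        - (ε B : ℂ) * (y B * wder (ambLap ε f) A y) := funext fun y => wder_DopBar hf A B y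
  simp only [Dop, opShift, hit]
  rw [hDfun]
  -- abbreviations for smoothness facts
  have hq : ContDiff ℝ (⊤ : ℕ∞) (wderBar f B) := wderBar_contDiff hf
  have hP : ContDiff ℝ (⊤ : ℕ∞) (wder (fun u => wderBar f B u) A) := wder_contDiff hq
  have hL : ContDiff ℝ (⊤ : ℕ∞) (ambLap ε f) := ambLap_contDiff hf
  have hdL : ContDiff ℝ (⊤ : ℕ∞) (wder (ambLap ε f) A) := wder_contDiff hL
  have hdbL : ContDiff ℝ (⊤ : ℕ∞) (wderBar (ambLap ε f) B) := wderBar_contDiff hL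
  have hF1 : ContDiff ℝ (⊤ : ℕ∞) (fun y => (N : ℂ) * wder (fun u => wderBar f B u) A y) :=
    contDiff_const.mul hP
  have hF2 : ContDiff ℝ (⊤ : ℕ∞) (fun y => eulerE (wder (fun u => wderBar f B u) A) y) :=
    eulerE_contDiff hP
  have hF3 : ContDiff ℝ (⊤ : ℕ∞) (fun y => eulerEbar (wder (fun u => wderBar f B u) A) y) :=
    eulerEbar_contDiff hP
  have hF4 : ContDiff ℝ (⊤ : ℕ∞)
      (fun y => ((ε B : ℂ) * if A = B then 1 else 0) * ambLap ε f y) :=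
    contDiff_const.mul hL
  have hF5 : ContDiff ℝ (⊤ : ℕ∞) (fun y => (ε B : ℂ) * (y B * wder (ambLap ε f) A y)) :=
    contDiff_const.mul (contDiff_coord.mul hdL)
  have hδ : (ε A : ℂ) * (if A = B then 1 else 0)
      = (ε B : ℂ) * (if A = B then 1 else 0) := by
    rcases eq_or_ne A B with rfl | hAB
    · rfl
    · simp [hAB]
  -- expansion of E applied to the derivative of DopBar
  have hEexp : eulerE (fun y =>
        (N : ℂ) * wder (fun u => wderBar f B u) A y
        + eulerE (wder (fun u => wderBar f B u) A) y
        + eulerEbar (wder (fun u => wderBar f B u) A) y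
        - ((ε B : ℂ) * if A = B then 1 else 0) * ambLap ε f y
        - (ε B : ℂ) * (y B * wder (ambLap ε f) A y)) x
      = (N : ℂ) * eulerE (wder (fun u => wderBar f B u) A) x
        + eulerE (fun y => eulerE (wder (fun u => wderBar f B u) A) y) x
        + eulerE (fun y => eulerEbar (wder (fun u => wderBar f B u) A) y) x
        - ((ε B : ℂ) * if A = B then 1 else 0) * eulerE (ambLap ε f) x
        - (ε B : ℂ) * (x B * wder (ambLap ε f) A x
            + x B * eulerE (wder (ambLap ε f) A) x) := by
    rw [eulerE_sub (((hF1.add hF2).add hF3).sub hF4) hF5,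
      eulerE_sub ((hF1.add hF2).add hF3) hF4,
      eulerE_add (hF1.add hF2) hF3, eulerE_add hF1 hF2,
      eulerE_const_mul hP, eulerE_const_mul hL,
      eulerE_const_mul (contDiff_coord.mul hdL), eulerE_coord_mul hdL]
  have hEbarexp : eulerEbar (fun y =>
        (N : ℂ) * wder (fun u => wderBar f B u) A y
        + eulerE (wder (fun u => wderBar f B u) A) y
        + eulerEbar (wder (fun u => wderBar f B u) A) y
        - ((ε B : ℂ) * if A = B then 1 else 0) * ambLap ε f y
        - (ε B : ℂ) * (y B * wder (ambLap ε f) A y)) x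
      = (N : ℂ) * eulerEbar (wder (fun u => wderBar f B u) A) x
        + eulerEbar (fun y => eulerE (wder (fun u => wderBar f B u) A) y) x
        + eulerEbar (fun y => eulerEbar (wder (fun u => wderBar f B u) A) y) x
        - ((ε B : ℂ) * if A = B then 1 else 0) * eulerEbar (ambLap ε f) x
        - (ε B : ℂ) * (x B * eulerEbar (wder (ambLap ε f) A) x) := by
    rw [eulerEbar_sub (((hF1.add hF2).add hF3).sub hF4) hF5,
      eulerEbar_sub ((hF1.add hF2).add hF3) hF4,
      eulerEbar_add (hF1.add hF2) hF3, eulerEbar_add hF1 hF2,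
      eulerEbar_const_mul hP, eulerEbar_const_mul hL,
      eulerEbar_const_mul (contDiff_coord.mul hdL), eulerEbar_coord_mul hdL]
  -- expansion of E and Ebar applied to the first-order error term
  have eP2 : (fun y => (ε B : ℂ) * y B * wder (ambLap ε f) A y
        + (ε A : ℂ) * (starRingEnd ℂ) (y A) * wderBar (ambLap ε f) B y
        + ((ε A : ℂ) * if A = B then 1 else 0) * ambLap ε f y)
      = fun y => (ε B : ℂ) * (y B * wder (ambLap ε f) A y)
        + (ε A : ℂ) * ((starRingEnd ℂ) (y A) * wderBar (ambLap ε f) B y)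
        + ((ε A : ℂ) * if A = B then 1 else 0) * ambLap ε f y := by
    funext y; ring
  have hG2 : ContDiff ℝ (⊤ : ℕ∞)
      (fun y => (ε A : ℂ) * ((starRingEnd ℂ) (y A) * wderBar (ambLap ε f) B y)) :=
    contDiff_const.mul (contDiff_conj_coord.mul hdbL)
  have hG3 : ContDiff ℝ (⊤ : ℕ∞)
      (fun y => ((ε A : ℂ) * if A = B then 1 else 0) * ambLap ε f y) :=
    contDiff_const.mul hL
  have hE2 : eulerE (fun y => (ε B : ℂ) * y B * wder (ambLap ε f) A y
        + (ε A : ℂ) * (starRingEnd ℂ) (y A) * wderBar (ambLap ε f) B y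
        + ((ε A : ℂ) * if A = B then 1 else 0) * ambLap ε f y) x
      = (ε B : ℂ) * (x B * wder (ambLap ε f) A x + x B * eulerE (wder (ambLap ε f) A) x)
        + (ε A : ℂ) * ((starRingEnd ℂ) (x A) * eulerE (wderBar (ambLap ε f) B) x)
        + ((ε A : ℂ) * if A = B then 1 else 0) * eulerE (ambLap ε f) x := by
    rw [eP2, eulerE_add (hF5.add hG2) hG3, eulerE_add hF5 hG2,
      eulerE_const_mul (contDiff_coord.mul hdL),
      eulerE_const_mul (contDiff_conj_coord.mul hdbL), eulerE_const_mul hL,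
      eulerE_coord_mul hdL, eulerE_conj_coord_mul hdbL]
  have hEbar2 : eulerEbar (fun y => (ε B : ℂ) * y B * wder (ambLap ε f) A y
        + (ε A : ℂ) * (starRingEnd ℂ) (y A) * wderBar (ambLap ε f) B y
        + ((ε A : ℂ) * if A = B then 1 else 0) * ambLap ε f y) x
      = (ε B : ℂ) * (x B * eulerEbar (wder (ambLap ε f) A) x)
        + (ε A : ℂ) * ((starRingEnd ℂ) (x A) * wderBar (ambLap ε f) B x
            + (starRingEnd ℂ) (x A) * eulerEbar (wderBar (ambLap ε f) B) x)
        + ((ε A : ℂ) * if A = B then 1 else 0) * eulerEbar (ambLap ε f) x := by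
    rw [eP2, eulerEbar_add (hF5.add hG2) hG3, eulerEbar_add hF5 hG2,
      eulerEbar_const_mul (contDiff_coord.mul hdL),
      eulerEbar_const_mul (contDiff_conj_coord.mul hdbL), eulerEbar_const_mul hL,
      eulerEbar_coord_mul hdL, eulerEbar_conj_coord_mul hdbL]
  -- expansion of E and Ebar applied to the inner opShift
  have hT2 : ContDiff ℝ (⊤ : ℕ∞)
      (fun y => eulerE (fun z => wder (fun u => wderBar f B u) A z) y) :=
    eulerE_contDiff hP
  have hT3 : ContDiff ℝ (⊤ : ℕ∞)
      (fun y => eulerEbar (fun z => wder (fun u => wderBar f B u) A z) y) :=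
    eulerEbar_contDiff hP
  have hT3E : eulerE (fun y =>
        (N : ℂ) * wder (fun u => wderBar f B u) A y
        + eulerE (fun z => wder (fun u => wderBar f B u) A z) y
        + eulerEbar (fun z => wder (fun u => wderBar f B u) A z) y) x
      = (N : ℂ) * eulerE (wder (fun u => wderBar f B u) A) x
        + eulerE (fun y => eulerE (wder (fun u => wderBar f B u) A) y) x
        + eulerE (fun y => eulerEbar (wder (fun u => wderBar f B u) A) y) x := by
    rw [eulerE_add (hF1.add hT2) hT3, eulerE_add hF1 hT2, eulerE_const_mul hP]
  have hT3Ebar : eulerEbar (fun y =>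
        (N : ℂ) * wder (fun u => wderBar f B u) A y
        + eulerE (fun z => wder (fun u => wderBar f B u) A z) y
        + eulerEbar (fun z => wder (fun u => wderBar f B u) A z) y) x
      = (N : ℂ) * eulerEbar (wder (fun u => wderBar f B u) A) x
        + eulerEbar (fun y => eulerE (wder (fun u => wderBar f B u) A) y) x
        + eulerEbar (fun y => eulerEbar (wder (fun u => wderBar f B u) A) y) x := by
    rw [eulerEbar_add (hF1.add hT2) hT3, eulerEbar_add hF1 hT2, eulerEbar_const_mul hP]
  rw [wder_DopBar hf A B x, ambLap_DopBar hf hε B x, hEexp, hEbarexp, hE2, hEbar2,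
    hT3E, hT3Ebar, hδ]
  ring
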